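/- arXiv:2108.01838 — 3 statements merged into one kernel-verified Lean document; each statement's English description precedes it below -/
import Mathlib

section
/- If g ∈ Γ is not σ-regular, then for every linear trace map t: ℂ^σΓ → ℂ (i.e. t vanishing on commutators), one has t(ḡ) = 0. -/
/-- Twisted convolution product on the twisted group algebra ℂ^σΓ. -/
noncomputable def twMul {G : Type*} [Group G] (σ : G → G → ℂ) (a b : G →₀ ℂ) : G →₀ ℂ :=
  a.sum fun g₁ c₁ => b.sum fun g₂ c₂ => Finsupp.single (g₁ * g₂) (σ g₁ g₂ * (c₁ * c₂))

lemma twMul_single {G : Type*} [Group G] (σ : G → G → ℂ) (a b : G) (c d : ℂ) :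
    twMul σ (Finsupp.single a c) (Finsupp.single b d)
      = Finsupp.single (a * b) (σ a b * (c * d)) := by
  unfold twMul
  rw [Finsupp.sum_single_index, Finsupp.sum_single_index] <;> simp

/-- If g ∈ Γ is not σ-regular, then every linear trace t : ℂ^σΓ → ℂ
(i.e. t(ab) = t(ba) for all a,b) satisfies t(ḡ) = 0. -/
theorem stmt4 {G : Type*} [Group G] (σ : G → G → ℂ)
    (hU : ∀ γ μ : G, ‖σ γ μ‖ = 1)
    (hcoc : ∀ γ μ δ : G, σ γ μ * σ (γ * μ) δ = σ γ (μ * δ) * σ μ δ)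
    (hn1 : ∀ γ : G, σ γ γ⁻¹ = 1) (hn2 : ∀ γ : G, σ γ⁻¹ γ = 1) (g : G)
    (hirr : ¬ (∀ z : G, z * g = g * z → σ g z = σ z g)) :
    ∀ t : (G →₀ ℂ) →ₗ[ℂ] ℂ, (∀ a b : G →₀ ℂ, t (twMul σ a b) = t (twMul σ b a)) →
      t (Finsupp.single g 1) = 0 := by
  push_neg at hirr
  obtain ⟨z, hz, hne⟩ := hirr
  intro t ht
  have hnz : ∀ x y : G, σ x y ≠ 0 := by
    intro x y h
    have := hU x y
    rw [h] at this; simp at this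
  -- σ 1 g' = 1 for all g'
  have hone : ∀ x : G, σ 1 x = 1 := by
    intro x
    have h := hcoc 1 1 x
    have h11 : σ 1 1 = 1 := by simpa using hn1 1
    rw [h11, one_mul, one_mul, one_mul] at h
    exact (mul_left_cancel₀ (hnz 1 x) (by rw [mul_one]; exact h)).symm
  -- key coefficients
  set c₁ := σ z (z⁻¹ * g) with hc₁
  set c₂ := σ (z⁻¹ * g) z with hc₂
  -- c₁ = (σ z⁻¹ g)⁻¹
  have e1 : c₁ * σ z⁻¹ g = 1 := by
    have h := hcoc z z⁻¹ g
    rw [hn1 z, mul_inv_cancel, hone g, one_mul] at h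
    exact h.symm
  -- σ z⁻¹ (z*g) = (σ z g)⁻¹
  have e2 : σ z⁻¹ (z * g) * σ z g = 1 := by
    have h := hcoc z⁻¹ z g
    rw [hn2 z, inv_mul_cancel, hone g, one_mul] at h
    exact h.symm
  -- σ z⁻¹ g * c₂ = σ z⁻¹ (g*z) * σ g z
  have e3 : σ z⁻¹ g * c₂ = σ z⁻¹ (g * z) * σ g z := by
    have h := hcoc z⁻¹ g z
    simpa [hc₂, mul_assoc] using h
  have hgz : g * z = z * g := hz.symm
  have key : c₁ ≠ c₂ := by
    intro hcc
    apply hne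
    -- from hcc: multiply e1-style relations
    have h4 : σ z⁻¹ g * c₁ = 1 := by rw [mul_comm]; exact e1
    have h5 : σ z⁻¹ g * c₂ = σ z⁻¹ (z * g) * σ g z := by rw [e3, hgz]
    rw [← hcc, h4] at h5
    -- 1 = σ z⁻¹ (z*g) * σ g z, and σ z⁻¹ (z*g) * σ z g = 1
    have : σ z⁻¹ (z * g) * σ g z = σ z⁻¹ (z * g) * σ z g := by rw [← h5, e2]
    exact mul_left_cancel₀ (hnz z⁻¹ (z * g)) this
  -- trace computation
  have hA := ht (Finsupp.single z 1) (Finsupp.single (z⁻¹ * g) 1)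
  rw [twMul_single, twMul_single] at hA
  have hz1 : z * (z⁻¹ * g) = g := by group
  have hz2 : (z⁻¹ * g) * z = g := by rw [mul_assoc, hgz, ← mul_assoc, inv_mul_cancel, one_mul]
  rw [hz1, hz2, mul_one] at hA
  have : c₁ • Finsupp.single g (1:ℂ) = Finsupp.single g (c₁ * 1) := by
    rw [Finsupp.smul_single]; simp
  have hA' : c₁ * t (Finsupp.single g 1) = c₂ * t (Finsupp.single g 1) := by
    have l1 : t (Finsupp.single g (c₁ * 1)) = c₁ * t (Finsupp.single g 1) := by
      rw [mul_one, ← Finsupp.smul_single_one, map_smul, smul_eq_mul]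
    have l2 : t (Finsupp.single g (c₂ * 1)) = c₂ * t (Finsupp.single g 1) := by
      rw [mul_one, ← Finsupp.smul_single_one, map_smul, smul_eq_mul]
    rw [← l1, ← l2, hA]
  have := sub_eq_zero.mpr hA'
  rw [← sub_mul] at this
  rcases mul_eq_zero.mp this with h | h
  · exact absurd (sub_eq_zero.mp h) key
  · exact h
end

section
/- Let g be σ-regular and θ its associated weight function. For any h in the conjugacy class (g) and any γ ∈ Γ, θ(γ⁻¹hγ)·σ(γ⁻¹hγ,γ⁻¹)⁻¹ = θ(h)·σ(γ⁻¹,h)⁻¹. -/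
theorem auxcalc (T1 T2 T3 T5 T6 T7 T8 T9 : ℂ) (h2 : T2 ≠ 0) (h3 : T3 ≠ 0) (h6 : T6 ≠ 0)
    (h8 : T8 ≠ 0) (h9 : T9 ≠ 0) :
    T1 * T2 / T3 * (1 / (T9 * T8 * T6) * (T5 * T6 / T2) / (1 / T3)) * T7
      = T1 * T5 * (T7 * (1 / T9) / T8) := by
  field_simp

/-- For g σ-regular with weight θ, for any h in the conjugacy class (g)
and any γ ∈ Γ, θ(γ⁻¹hγ)·σ(γ⁻¹hγ,γ⁻¹)⁻¹ = θ(h)·σ(γ⁻¹,h)⁻¹. -/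
theorem stmt8 {G : Type*} [Group G] (σ : G → G → ℂ)
    (hU : ∀ γ μ : G, ‖σ γ μ‖ = 1)
    (hcoc : ∀ γ μ δ : G, σ γ μ * σ (γ * μ) δ = σ γ (μ * δ) * σ μ δ)
    (hn1 : ∀ γ : G, σ γ γ⁻¹ = 1) (hn2 : ∀ γ : G, σ γ⁻¹ γ = 1) (g : G)
    (hreg : ∀ z : G, z * g = g * z → σ g z = σ z g)
    (θ : G → ℂ)
    (hθ1 : ∀ k : G, θ (k⁻¹ * g * k) = σ g⁻¹ k * σ k⁻¹ (g⁻¹ * k))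
    (hθ2 : ∀ γ : G, (¬ ∃ k : G, γ = k⁻¹ * g * k) → θ γ = 1) :
    ∀ h γ : G, (∃ k : G, h = k⁻¹ * g * k) →
      θ (γ⁻¹ * h * γ) * (σ (γ⁻¹ * h * γ) γ⁻¹)⁻¹ = θ h * (σ γ⁻¹ h)⁻¹ := by
  rintro h γ ⟨k, rfl⟩
  have hne : ∀ a b : G, σ a b ≠ 0 := by
    intro a b h0
    have := hU a b
    rw [h0] at this; simp at this
  have h11 : σ 1 1 = 1 := by simpa using hn1 1
  have hone : ∀ a : G, σ a 1 = 1 := by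
    intro a
    have h2 := hcoc a 1 1
    simp only [mul_one, one_mul, h11] at h2
    exact mul_left_cancel₀ (hne a 1) (by simpa using h2)
  have hone' : ∀ a : G, σ 1 a = 1 := by
    intro a
    have h2 := hcoc 1 1 a
    simp only [mul_one, one_mul, h11] at h2
    have h3 : σ 1 a * σ 1 a = σ 1 a * 1 := by rw [mul_one]; simpa using h2.symm
    exact mul_left_cancel₀ (hne 1 a) h3
  have hinv : ∀ a b : G, σ a (a⁻¹ * b) * σ a⁻¹ b = 1 := by
    intro a b
    have h2 := hcoc a a⁻¹ b
    rw [mul_inv_cancel, hn1, hone', one_mul] at h2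
    exact h2.symm
  have hcyc : ∀ a b : G, σ a b = σ b (b⁻¹ * a⁻¹) := by
    intro a b
    have h2 := hcoc a b (b⁻¹ * a⁻¹)
    have h3 : b * (b⁻¹ * a⁻¹) = a⁻¹ := by group
    have h4 : σ (a * b) (b⁻¹ * a⁻¹) = 1 := by
      rw [show b⁻¹ * a⁻¹ = (a * b)⁻¹ from (mul_inv_rev a b).symm]; exact hn1 _
    rw [h3, hn1, h4, mul_one, one_mul] at h2
    exact h2
  have t1 : γ⁻¹ * (k⁻¹ * g * k) * γ = (k * γ)⁻¹ * g * (k * γ) := by group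
  rw [t1, hθ1 (k * γ), hθ1 k]
  -- e1
  have e1 : σ g⁻¹ (k * γ) = σ g⁻¹ k * σ (g⁻¹ * k) γ / σ k γ := by
    rw [eq_div_iff (hne k γ)]
    linear_combination - hcoc g⁻¹ k γ
  -- e3
  have e3 : σ k⁻¹ (g⁻¹ * (k * γ)) = σ k⁻¹ (g⁻¹ * k) * σ (k⁻¹ * g⁻¹ * k) γ / σ (g⁻¹ * k) γ := by
    rw [eq_div_iff (hne (g⁻¹ * k) γ)]
    have h2 := hcoc k⁻¹ (g⁻¹ * k) γ
    have a1 : k⁻¹ * (g⁻¹ * k) = k⁻¹ * g⁻¹ * k := by group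
    have a2 : g⁻¹ * k * γ = g⁻¹ * (k * γ) := by group
    rw [a1, a2] at h2
    linear_combination - h2
  -- e4 : σ γ⁻¹ k⁻¹ * σ k γ = 1
  have e4 : σ γ⁻¹ k⁻¹ = 1 / σ k γ := by
    rw [eq_div_iff (hne k γ)]
    have h2 := hcoc γ⁻¹ k⁻¹ (k * γ)
    have a1 : k⁻¹ * (k * γ) = γ := by group
    have a2 : γ⁻¹ * k⁻¹ = (k * γ)⁻¹ := by group
    rw [a1, a2, hn2, hn2, one_mul] at h2
    have h3 := hinv k (k * γ)
    rw [a1] at h3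
    rw [mul_one] at h2
    rw [h2]
    linear_combination h3
  -- e2
  have e2 : σ (k * γ)⁻¹ (g⁻¹ * (k * γ))
      = σ γ⁻¹ (k⁻¹ * g⁻¹ * k * γ) * σ k⁻¹ (g⁻¹ * (k * γ)) / σ γ⁻¹ k⁻¹ := by
    rw [eq_div_iff (hne γ⁻¹ k⁻¹)]
    have h2 := hcoc γ⁻¹ k⁻¹ (g⁻¹ * (k * γ))
    have a1 : k⁻¹ * (g⁻¹ * (k * γ)) = k⁻¹ * g⁻¹ * k * γ := by group
    have a2 : γ⁻¹ * k⁻¹ = (k * γ)⁻¹ := by group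
    rw [a1, a2] at h2
    linear_combination h2
  -- e6
  have e6 : σ (k⁻¹ * g * k * γ) γ⁻¹ = 1 / σ (k⁻¹ * g * k) γ := by
    rw [eq_div_iff (hne (k⁻¹ * g * k) γ)]
    have h2 := hcoc (k⁻¹ * g * k) γ γ⁻¹
    rw [mul_inv_cancel, hone, hn1, one_mul] at h2
    linear_combination h2
  -- e5
  have e5 : σ ((k * γ)⁻¹ * g * (k * γ)) γ⁻¹
      = σ γ⁻¹ (k⁻¹ * g * k) * σ (k⁻¹ * g * k * γ) γ⁻¹ / σ γ⁻¹ (k⁻¹ * g * k * γ) := by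
    rw [eq_div_iff (hne γ⁻¹ (k⁻¹ * g * k * γ))]
    have h2 := hcoc γ⁻¹ (k⁻¹ * g * k * γ) γ⁻¹
    have a1 : γ⁻¹ * (k⁻¹ * g * k * γ) = (k * γ)⁻¹ * g * (k * γ) := by group
    have a2 : k⁻¹ * g * k * γ * γ⁻¹ = k⁻¹ * g * k := by group
    rw [a1, a2] at h2
    linear_combination h2
  -- e7 : cyclic
  have e7 : σ γ⁻¹ (k⁻¹ * g⁻¹ * k * γ)
      = σ (k⁻¹ * g⁻¹ * k * γ) (γ⁻¹ * (k⁻¹ * g * k * γ)) := by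
    have h2 := hcyc γ⁻¹ (k⁻¹ * g⁻¹ * k * γ)
    have a1 : (k⁻¹ * g⁻¹ * k * γ)⁻¹ * γ⁻¹⁻¹ = γ⁻¹ * (k⁻¹ * g * k * γ) := by group
    rw [a1] at h2
    exact h2
  -- e8
  have e8 : σ (k⁻¹ * g⁻¹ * k * γ) (γ⁻¹ * (k⁻¹ * g * k * γ))
      = 1 / (σ (k⁻¹ * g * k) γ * σ γ⁻¹ (k⁻¹ * g * k * γ) * σ (k⁻¹ * g⁻¹ * k) γ) := by
    rw [eq_div_iff (by
      exact mul_ne_zero (mul_ne_zero (hne _ _) (hne _ _)) (hne _ _))]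
    have h2 := hcoc (k⁻¹ * g⁻¹ * k) γ (γ⁻¹ * (k⁻¹ * g * k * γ))
    have a1 : k⁻¹ * g⁻¹ * k * γ = (k⁻¹ * g⁻¹ * k) * γ := by group
    have a2 : γ * (γ⁻¹ * (k⁻¹ * g * k * γ)) = k⁻¹ * g * k * γ := by group
    rw [a2] at h2
    -- σ (k⁻¹*g⁻¹*k) (k⁻¹*g*k*γ) = (σ (k⁻¹*g*k) γ)⁻¹
    have h3 := hinv (k⁻¹ * g⁻¹ * k) γ
    have a3 : (k⁻¹ * g⁻¹ * k)⁻¹ * γ = k⁻¹ * g * k * γ := by group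
    have a4 : (k⁻¹ * g⁻¹ * k)⁻¹ = k⁻¹ * g * k := by group
    rw [a3, a4] at h3
    have h4 := hinv γ (k⁻¹ * g * k * γ)
    linear_combination σ (k⁻¹ * g * k) γ * σ γ⁻¹ (k⁻¹ * g * k * γ) * h2
      + σ γ (γ⁻¹ * (k⁻¹ * g * k * γ)) * σ γ⁻¹ (k⁻¹ * g * k * γ) * h3
      + h4
  rw [inv_eq_one_div (σ ((k * γ)⁻¹ * g * (k * γ)) γ⁻¹),
    inv_eq_one_div (σ γ⁻¹ (k⁻¹ * g * k)), mul_one_div, mul_one_div,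
    div_eq_div_iff (hne _ _) (hne _ _)]
  rw [e1, e2, e3, e4, e5, e6, e7, e8]
  exact auxcalc _ _ _ _ _ _ _ _ (hne _ _) (hne _ _) (hne _ _) (hne _ _) (hne _ _)
end

section
/- Let g be σ-regular. The σ-weighted (g)-trace τ^{(g)}_σ: ℂ^σΓ → ℂ, defined on the basis by τ^{(g)}_σ(γ̄) = θ(γ) if γ ∈ (g) and 0 otherwise, is a trace on ℂ^σΓ: τ^{(g)}_σ(ab) = τ^{(g)}_σ(ba). -/
open scoped Classical

/-- Weighted sum functional, as an additive hom. -/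
noncomputable def wsum {G : Type*} (w : G → ℂ) : (G →₀ ℂ) →+ ℂ :=
  AddMonoidHom.mk' (fun s => s.sum fun γ c => w γ * c)
    (fun s t => Finsupp.sum_add_index' (fun γ => mul_zero _) (fun γ c₁ c₂ => mul_add _ _ _))

lemma wsum_apply {G : Type*} (w : G → ℂ) (s : G →₀ ℂ) :
    wsum w s = s.sum fun γ c => w γ * c := rfl

lemma wsum_single {G : Type*} (w : G → ℂ) (γ : G) (c : ℂ) :
    wsum w (Finsupp.single γ c) = w γ * c := by
  rw [wsum_apply]
  exact Finsupp.sum_single_index (mul_zero _)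

lemma wsum_twMul {G : Type*} [Group G] (σ : G → G → ℂ) (w : G → ℂ) (a b : G →₀ ℂ) :
    wsum w (twMul σ a b)
      = ∑ x ∈ a.support, ∑ y ∈ b.support, w (x * y) * (σ x y * (a x * b y)) := by
  rw [twMul, Finsupp.sum, map_sum]
  refine Finset.sum_congr rfl fun x hx => ?_
  rw [Finsupp.sum, map_sum]
  exact Finset.sum_congr rfl fun y hy => wsum_single _ _ _

/-- For g σ-regular, the σ-weighted (g)-trace τ^{(g)}_σ on ℂ^σΓ,
given on the basis by τ^{(g)}_σ(γ̄) = θ(γ) for γ ∈ (g) and 0 otherwise, is a trace. -/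
theorem stmt13 {G : Type*} [Group G] (σ : G → G → ℂ)
    (hU : ∀ γ μ : G, ‖σ γ μ‖ = 1)
    (hcoc : ∀ γ μ δ : G, σ γ μ * σ (γ * μ) δ = σ γ (μ * δ) * σ μ δ)
    (hn1 : ∀ γ : G, σ γ γ⁻¹ = 1) (hn2 : ∀ γ : G, σ γ⁻¹ γ = 1) (g : G)
    (hreg : ∀ z : G, z * g = g * z → σ g z = σ z g)
    (θ : G → ℂ)
    (hθ1 : ∀ k : G, θ (k⁻¹ * g * k) = σ g⁻¹ k * σ k⁻¹ (g⁻¹ * k))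
    (hθ2 : ∀ γ : G, (¬ ∃ k : G, γ = k⁻¹ * g * k) → θ γ = 1)
    (τ : (G →₀ ℂ) → ℂ)
    (hτ : ∀ a : G →₀ ℂ,
      τ a = a.sum fun γ c => if ∃ k : G, γ = k⁻¹ * g * k then θ γ * c else 0) :
    ∀ a b : G →₀ ℂ, τ (twMul σ a b) = τ (twMul σ b a) := by
  -- basic consequences of the hypotheses
  have hne : ∀ u v : G, σ u v ≠ 0 := by
    intro u v h
    have := hU u v
    rw [h] at this
    simp at this
  have h11 : σ 1 1 = 1 := by simpa using hn1 1
  have h1r : ∀ u : G, σ u 1 = 1 := by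
    intro u
    have h := hcoc u 1 1
    simp only [mul_one, one_mul, h11] at h
    exact mul_right_cancel₀ (hne u 1) (h.trans (one_mul (σ u 1)).symm)
  have hL2' : ∀ u v : G, σ u v * σ (u * v) v⁻¹ = 1 := by
    intro u v
    have h := hcoc u v v⁻¹
    simp only [mul_inv_cancel, h1r, hn1, mul_one] at h
    exact h
  have hL2 : ∀ u v : G, σ u v * σ v⁻¹ u⁻¹ = 1 := by
    intro u v
    have h := hcoc (u * v) v⁻¹ u⁻¹
    rw [mul_inv_cancel_right, hn1 u, mul_one,
      show v⁻¹ * u⁻¹ = (u * v)⁻¹ from (mul_inv_rev u v).symm, hn1 (u * v), one_mul] at h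
    rw [← h]
    exact hL2' u v
  -- key pointwise identity
  have key : ∀ x y k : G, x * y = k⁻¹ * g * k →
      θ (x * y) * σ x y = θ (y * x) * σ y x := by
    intro x y k hk
    have hy : y = x⁻¹ * (k⁻¹ * g * k) := by rw [← hk]; group
    have hyx : y * x = (k * x)⁻¹ * g * (k * x) := by rw [hy]; group
    rw [hk, hθ1 k, hyx, hθ1 (k * x), mul_inv_rev]
    have e1 := hcoc g⁻¹ k x
    have e3 := hcoc k⁻¹ (g⁻¹ * k) x
    have e2 := hcoc x⁻¹ k⁻¹ (g⁻¹ * (k * x))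
    have a1 : k⁻¹ * (g⁻¹ * k) = y⁻¹ * x⁻¹ := by rw [hy]; group
    have a2 : k⁻¹ * (g⁻¹ * (k * x)) = y⁻¹ := by rw [hy]; group
    rw [a1, mul_assoc g⁻¹ k x] at e3
    rw [a2] at e2
    have r1 := hL2 k x
    have r2 := hL2 x y
    have r3 := hL2' y⁻¹ x⁻¹
    rw [inv_inv] at r3
    have r4 := hL2 y x
    -- σ (y⁻¹x⁻¹) x = σ x y
    have hG1 : σ (y⁻¹ * x⁻¹) x = σ x y :=
      mul_left_cancel₀ (hne y⁻¹ x⁻¹) (by linear_combination r3 - r2)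
    rw [hG1] at e3
    -- s1 : A*B*C = D*I*H
    have s1 : σ g⁻¹ k * σ k⁻¹ (g⁻¹ * k) * σ x y
        = σ g⁻¹ (k * x) * σ k x * σ k⁻¹ (g⁻¹ * (k * x)) := by
      refine mul_right_cancel₀ (hne (g⁻¹ * k) x) ?_
      linear_combination (σ k⁻¹ (g⁻¹ * k) * σ x y) * e1
        + (σ g⁻¹ (k * x) * σ k x) * e3
    -- s2 : E*F = I*H
    have s2 : σ (x⁻¹ * k⁻¹) (g⁻¹ * (k * x)) * σ y x
        = σ k x * σ k⁻¹ (g⁻¹ * (k * x)) := by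
      linear_combination (σ k x * σ y x) * e2
        - (σ (x⁻¹ * k⁻¹) (g⁻¹ * (k * x)) * σ y x) * r1
        + (σ k x * σ k⁻¹ (g⁻¹ * (k * x))) * r4
    linear_combination s1 - σ g⁻¹ (k * x) * s2
  -- the weight function
  set w : G → ℂ := fun γ => if ∃ k : G, γ = k⁻¹ * g * k then θ γ else 0 with hw
  have hτT : ∀ s : G →₀ ℂ, τ s = wsum w s := by
    intro s
    rw [hτ, wsum_apply]
    refine Finsupp.sum_congr fun γ _ => ?_
    by_cases h : ∃ k : G, γ = k⁻¹ * g * k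
    · simp [hw, h]
    · simp [hw, h]
  have point : ∀ x y : G, w (x * y) * σ x y = w (y * x) * σ y x := by
    intro x y
    by_cases hP : ∃ k : G, x * y = k⁻¹ * g * k
    · obtain ⟨k, hk⟩ := hP
      have hyx : y * x = (k * x)⁻¹ * g * (k * x) := by
        have hy : y = x⁻¹ * (k⁻¹ * g * k) := by rw [← hk]; group
        rw [hy]; group
      have hP1 : ∃ k' : G, x * y = k'⁻¹ * g * k' := ⟨k, hk⟩
      have hP2 : ∃ k' : G, y * x = k'⁻¹ * g * k' := ⟨k * x, hyx⟩
      rw [hw]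
      simp only [if_pos hP1, if_pos hP2]
      exact key x y k hk
    · have hP2 : ¬ ∃ k' : G, y * x = k'⁻¹ * g * k' := by
        rintro ⟨k, hk⟩
        refine hP ⟨k * y, ?_⟩
        have hx : x = y⁻¹ * (k⁻¹ * g * k) := by rw [← hk]; group
        rw [hx]; group
      rw [hw]
      simp only [if_neg hP, if_neg hP2]
      ring
  intro a b
  rw [hτT, hτT, wsum_twMul, wsum_twMul, Finset.sum_comm]
  refine Finset.sum_congr rfl fun u hu => Finset.sum_congr rfl fun v hv => ?_
  linear_combination (a v * b u) * point v u
end
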